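/- arXiv:2301.01574 — 3 statements merged into one kernel-verified Lean document; each statement's English description precedes it below -/
import Mathlib

section
/- Let d ≥ 2 and let H_d be the (d+1)×(d+1) matrix whose first row is (x_1, x_2, …, x_d, 1), and whose (k+1)-th row (for k = 1, …, d) is (x_1 x_{d+1-k}, x_2 x_{d+1-k}, …, x_j x_{d+1-k} − δ_{j,d+1-k}, …, x_d x_{d+1-k}, x_{d+1-k}). Then det H_d = (−1)^{d(d+3)/2} for every x = (x_1, …, x_d) ∈ ℝ^d with |x| = 1. In particular H_d has rank d+1. -/
open Equiv

private def castSuccEquiv (n : ℕ) : Fin n ≃ {j : Fin (n + 1) // (j : ℕ) < n} where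
  toFun i := ⟨i.castSucc, i.isLt⟩
  invFun j := ⟨j.1, j.2⟩
  left_inv i := rfl
  right_inv j := by ext; simp

lemma my_sign_revPerm (n : ℕ) :
    Equiv.Perm.sign (Fin.revPerm : Equiv.Perm (Fin n)) = (-1) ^ (n * (n - 1) / 2) := by
  induction n with
  | zero => simp [Subsingleton.elim (Fin.revPerm : Equiv.Perm (Fin 0)) 1]
  | succ n ih =>
    set f := castSuccEquiv n with hf
    have key : (Fin.revPerm : Equiv.Perm (Fin (n + 1))) * finRotate (n + 1)
        = Equiv.Perm.extendDomain (Fin.revPerm : Equiv.Perm (Fin n)) f := by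
      apply Equiv.ext
      intro i
      induction i using Fin.lastCases with
      | last =>
        have h1 : ¬ ((Fin.last n : Fin (n+1)) : ℕ) < n := by simp
        rw [Equiv.Perm.mul_apply, Equiv.Perm.extendDomain_apply_not_subtype Fin.revPerm f h1]
        simp [finRotate_last]
      | cast i =>
        have h1 : ((i.castSucc : Fin (n+1)) : ℕ) < n := i.isLt
        rw [Equiv.Perm.mul_apply, Equiv.Perm.extendDomain_apply_subtype Fin.revPerm f h1]
        have h2 : f.symm ⟨i.castSucc, h1⟩ = i := by
          apply Fin.ext; rfl
        rw [h2]
        apply Fin.ext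
        have h3 : ((finRotate (n+1)) i.castSucc : ℕ) = i.val + 1 := by
          rw [finRotate_succ_apply, Fin.val_add_one_of_lt (Fin.castSucc_lt_last i)]
          simp
        have h4 : ((Fin.revPerm ((finRotate (n+1)) i.castSucc) : Fin (n+1)) : ℕ)
            = (n + 1) - (((finRotate (n+1)) i.castSucc : ℕ) + 1) := Fin.val_rev _
        rw [h4, h3]
        have h5 : ((f (Fin.revPerm i) : Fin (n+1)) : ℕ) = (Fin.rev i : Fin n).val := rfl
        rw [h5, Fin.val_rev]
        omega
    have hs := congrArg Equiv.Perm.sign key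
    rw [map_mul, Equiv.Perm.sign_extendDomain, ih, sign_finRotate] at hs
    have h4 : Equiv.Perm.sign (Fin.revPerm : Equiv.Perm (Fin (n+1)))
        = (-1) ^ (n * (n - 1) / 2) * (-1)^n := by
      rw [← hs, mul_assoc, Nat.add_sub_cancel, Int.units_mul_self, mul_one]
    rw [h4, ← pow_add]
    congr 1
    have e1 : n * (n - 1) / 2 = n.choose 2 := (Nat.choose_two_right n).symm
    have e2 : (n + 1) * (n + 1 - 1) / 2 = (n+1).choose 2 := (Nat.choose_two_right (n+1)).symm
    have e3 : (n+1).choose 2 = n.choose 1 + n.choose 2 := Nat.choose_succ_succ n 1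
    rw [e1, e2, e3, Nat.choose_one_right]
    omega

/-- For `x` on the unit sphere in `ℝ^d` (`d ≥ 2`), the `(d+1)×(d+1)` matrix `H_d`
whose first row is `(x_1, …, x_d, 1)` and whose `(k+1)`-th row (for `k = 1, …, d`) is
`(x_1 x_{d+1-k} - δ_{1,d+1-k}, …, x_d x_{d+1-k} - δ_{d,d+1-k}, x_{d+1-k})`
has determinant `(-1)^(d(d+3)/2)`; in particular it has rank `d + 1`. -/
theorem stmt0 (d : ℕ) (hd : 2 ≤ d) (x : Fin d → ℝ) (hx : ∑ j, x j ^ 2 = 1) :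
    (Matrix.of fun i j : Fin (d + 1) =>
        if hi : i.val = 0 then
          (if hj : j.val < d then x ⟨j.val, hj⟩ else 1)
        else
          (if hj : j.val < d then
            x ⟨j.val, hj⟩ * x ⟨d - i.val, by omega⟩ -
              (if j.val = d - i.val then 1 else 0)
          else x ⟨d - i.val, by omega⟩)).det
      = (-1 : ℝ) ^ (d * (d + 3) / 2) ∧
    (Matrix.of fun i j : Fin (d + 1) =>
        if hi : i.val = 0 then
          (if hj : j.val < d then x ⟨j.val, hj⟩ else 1)
        else
          (if hj : j.val < d then
            x ⟨j.val, hj⟩ * x ⟨d - i.val, by omega⟩ -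
              (if j.val = d - i.val then 1 else 0)
          else x ⟨d - i.val, by omega⟩)).rank = d + 1 := by
  obtain ⟨A, hA⟩ : ∃ A : Matrix (Fin (d+1)) (Fin (d+1)) ℝ,
      A = (Matrix.of fun i j : Fin (d + 1) =>
        if hi : i.val = 0 then
          (if hj : j.val < d then x ⟨j.val, hj⟩ else 1)
        else
          (if hj : j.val < d then
            x ⟨j.val, hj⟩ * x ⟨d - i.val, by omega⟩ -
              (if j.val = d - i.val then 1 else 0)
          else x ⟨d - i.val, by omega⟩)) := ⟨_, rfl⟩
  rw [← hA]
  -- the row-reduced matrix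
  set N : Matrix (Fin (d+1)) (Fin (d+1)) ℝ := Matrix.of fun i j =>
    if i.val = 0 then (if hj : j.val < d then x ⟨j.val, hj⟩ else 1)
    else -(if j.val = d - i.val then 1 else 0) with hN
  have hN0 : ∀ j : Fin (d+1), N 0 j = (if hj : j.val < d then x ⟨j.val, hj⟩ else 1) := by
    intro j
    simp [hN]
  -- step 1 : A.det = N.det
  have step1 : A.det = N.det := by
    apply Matrix.det_eq_of_forall_row_eq_smul_add_const
      (fun i : Fin (d+1) => if h : i.val = 0 then 0 else x ⟨d - i.val, by have := i.isLt; omega⟩)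
      (0 : Fin (d+1))
    · simp
    · intro i j
      rw [hA]
      by_cases hi : i.val = 0
      · simp [hN, hi, show i = 0 from Fin.ext (by simp [hi])]
      · rw [hN0]
        simp only [Matrix.of_apply, hN, dif_neg hi, if_neg hi]
        by_cases hj : j.val < d
        · simp only [dif_pos hj]
          ring
        · simp only [dif_neg hj]
          have hne : ¬ (j.val = d - i.val) := by
            have := j.isLt
            have := i.isLt
            omega
          rw [if_neg hne]
          ring
  -- step 2 : lower triangular after reversing rows
  have htri : (N.submatrix (Fin.revPerm : Equiv.Perm (Fin (d+1))) id).BlockTriangular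
      OrderDual.toDual := by
    intro i j hij
    have hij' : i < j := hij
    have hij'' : (i : ℕ) < (j : ℕ) := hij'
    have hrev : ((Fin.rev i : Fin (d+1)) : ℕ) = (d + 1) - (i.val + 1) := Fin.val_rev i
    have hji : (j : ℕ) ≤ d := Nat.lt_succ_iff.mp j.isLt
    simp only [Matrix.submatrix_apply, id_eq, Fin.revPerm_apply, hN, Matrix.of_apply]
    rw [if_neg (by omega), if_neg (by rw [hrev]; omega)]
    simp
  have hlow : (N.submatrix (Fin.revPerm : Equiv.Perm (Fin (d+1))) id).det = (-1 : ℝ)^d := by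
    rw [Matrix.det_of_lowerTriangular _ htri, Fin.prod_univ_castSucc]
    have hdiag : ∀ k : Fin d,
        (N.submatrix (Fin.revPerm : Equiv.Perm (Fin (d+1))) id) k.castSucc k.castSucc = -1 := by
      intro k
      have hk : (k.castSucc : Fin (d+1)).val = k.val := rfl
      have hrev : ((Fin.rev (k.castSucc) : Fin (d+1)) : ℕ) = (d + 1) - (k.val + 1) :=
        Fin.val_rev _
      have hkd : k.val < d := k.isLt
      simp only [Matrix.submatrix_apply, id_eq, Fin.revPerm_apply, hN, Matrix.of_apply]
      rw [if_neg (by omega), if_pos (by omega)]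
    have hlast :
        (N.submatrix (Fin.revPerm : Equiv.Perm (Fin (d+1))) id) (Fin.last d) (Fin.last d)
          = 1 := by
      have hrev : ((Fin.rev (Fin.last d) : Fin (d+1)) : ℕ) = 0 := by
        rw [Fin.val_rev]; simp
      simp only [Matrix.submatrix_apply, id_eq, Fin.revPerm_apply, hN, Matrix.of_apply]
      rw [if_pos hrev, dif_neg (by simp)]
    rw [hlast, mul_one]
    calc (∏ k : Fin d, (N.submatrix (Fin.revPerm : Equiv.Perm (Fin (d+1))) id)
            k.castSucc k.castSucc)
        = ∏ _k : Fin d, (-1 : ℝ) := Finset.prod_congr rfl (fun k _ => hdiag k)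
      _ = (-1 : ℝ)^d := by simp
  have hperm := Matrix.det_permute (Fin.revPerm : Equiv.Perm (Fin (d+1))) N
  rw [hlow, my_sign_revPerm] at hperm
  have hcast : ((((-1 : ℤˣ) ^ ((d+1) * (d+1-1) / 2) : ℤˣ) : ℤ) : ℝ)
      = (-1 : ℝ) ^ ((d+1) * d / 2) := by
    push_cast
    norm_num
  rw [hcast] at hperm
  -- extract N.det
  have hS : ((-1:ℝ)^((d+1)*d/2)) * ((-1:ℝ)^((d+1)*d/2)) = 1 := by
    rw [← pow_add]
    exact Even.neg_one_pow ⟨_, rfl⟩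
  have hNdet : N.det = (-1 : ℝ) ^ ((d+1)*d/2 + d) := by
    calc N.det = ((-1:ℝ)^((d+1)*d/2) * (-1:ℝ)^((d+1)*d/2)) * N.det := by rw [hS, one_mul]
      _ = (-1:ℝ)^((d+1)*d/2) * ((-1:ℝ)^((d+1)*d/2) * N.det) := by ring
      _ = (-1:ℝ)^((d+1)*d/2) * (-1 : ℝ)^d := by rw [← hperm]
      _ = _ := by rw [← pow_add]
  have hexp : (d+1)*d/2 + d = d * (d + 3) / 2 := by
    have e1 : d*(d+3) = (d+1)*d + 2*d := by ring
    have e2 : (d+1)*d % 2 = 0 := Nat.even_iff.mp (by rw [Nat.mul_comm]; exact Nat.even_mul_succ_self d)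
    omega
  have hdet : A.det = (-1 : ℝ) ^ (d * (d + 3) / 2) := by
    rw [step1, hNdet, hexp]
  refine ⟨hdet, ?_⟩
  have hunit : IsUnit A := by
    rw [Matrix.isUnit_iff_isUnit_det, hdet, isUnit_iff_ne_zero]
    positivity
  rw [Matrix.rank_of_isUnit A hunit, Fintype.card_fin]
end

section
/- There exist d smooth (indeed polynomial) tangent vector fields h_2, …, h_{d+1} on the unit sphere S^{d−1} ⊂ ℝ^d such that for every x ∈ S^{d−1}, the family (x, h_2(x), …, h_{d+1}(x)) spans ℝ^d, i.e. rank(x, h_2(x), …, h_{d+1}(x)) = d. -/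
/-- There exist `d` smooth (polynomial) tangent vector fields `h_2, …, h_{d+1}` on the unit
sphere `S^{d-1} ⊂ ℝ^d` such that for every `x` on the sphere the family
`(x, h_2(x), …, h_{d+1}(x))` spans `ℝ^d`, i.e. has rank `d`. -/
theorem stmt2 (d : ℕ) (hd : 2 ≤ d) :
    ∃ h : Fin d → (Fin d → ℝ) → (Fin d → ℝ),
      (∀ i, ContDiff ℝ (⊤ : ℕ∞) (h i)) ∧
      (∀ x : Fin d → ℝ, ∑ j, x j ^ 2 = 1 → ∀ i, ∑ j, h i x j * x j = 0) ∧
      (∀ x : Fin d → ℝ, ∑ j, x j ^ 2 = 1 →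
        Submodule.span ℝ ({x} ∪ Set.range fun i => h i x) = ⊤) := by
  refine ⟨fun i x j => (if i = j then (1:ℝ) else 0) - x i * x j, ?_, ?_, ?_⟩
  · intro i
    apply contDiff_pi.2
    intro j
    exact contDiff_const.sub
      (((ContinuousLinearMap.proj i : (Fin d → ℝ) →L[ℝ] ℝ).contDiff).mul
        ((ContinuousLinearMap.proj j : (Fin d → ℝ) →L[ℝ] ℝ).contDiff))
  · intro x hx i
    have : ∑ j, ((if i = j then (1:ℝ) else 0) - x i * x j) * x j
        = (∑ j, (if i = j then (1:ℝ) else 0) * x j) - x i * ∑ j, x j ^ 2 := by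
      rw [Finset.mul_sum, ← Finset.sum_sub_distrib]
      congr 1; funext j; ring
    rw [this, hx]
    simp
  · intro x hx
    set S : Set (Fin d → ℝ) :=
      {x} ∪ Set.range fun i => (fun j => (if i = j then (1:ℝ) else 0) - x i * x j) with hS
    have hx1 : x ∈ Submodule.span ℝ S := Submodule.subset_span (Or.inl rfl)
    have he : ∀ j : Fin d, (Pi.single j 1 : Fin d → ℝ) ∈ Submodule.span ℝ S := by
      intro j
      have hh : (fun k => (if j = k then (1:ℝ) else 0) - x j * x k) ∈ Submodule.span ℝ S :=
        Submodule.subset_span (Or.inr ⟨j, rfl⟩)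
      have := Submodule.add_mem _ hh (Submodule.smul_mem _ (x j) hx1)
      convert this using 1
      funext k
      by_cases h : j = k <;> simp [Pi.single_apply, h, eq_comm]
    rw [eq_top_iff]
    refine le_trans (le_of_eq (Pi.basisFun ℝ (Fin d)).span_eq.symm) (Submodule.span_le.2 ?_)
    rintro _ ⟨j, rfl⟩
    simpa [Pi.basisFun_apply] using he j
end

section
/- Let F : Ω × ℝ^m → ℝ^P, (x, ζ) ↦ F_x ζ, where Ω ⊂ ℝ^d is open and bounded, each F_x is linear of rank d+1, and x ↦ F_x is α-Hölder continuous (0 < α ≤ 1) on each of finitely many subsets covering Ω. Let B = (∪_{x∈Ω} Im(F_x)) ∩ {b ∈ ℝ^P : b_P = 1}. If P > (d + m)/α then the (P−1)-dimensional Hausdorff measure of the projection of B onto the first P−1 coordinates is zero. Consequently, for almost every a ∈ ℝ^{P−1}, the vector (a_1,…,a_{P−1},1) is not in ∪_{x∈Ω} Im(F_x). -/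
/-!
Dehomogenization `b ↦ (b₁/b_P, …, b_{P-1}/b_P)` maps `B` onto its projection, and it is invariant
under scaling, so only the directions `ζ` matter: in the affine chart `ζ_j = 1` the set is swept
out by `(x, w) ↦ dehomogenize (F_x (1, w))` with `(x, w)` ranging over a space of dimension
`d + m - 1`. On the countably many pieces where `‖F_x‖`, `‖ζ‖` and `1 / |(F_x ζ)_P|` are bounded
this map is `α`-Hölder, so each image has Hausdorff dimension at most `(d + m - 1)/α < P - 1`.
-/

open MeasureTheory Set
open scoped NNReal ENNReal

namespace HolderOnWith

variable {X Y : Type*} [PseudoMetricSpace X] [PseudoMetricSpace Y] {C r : ℝ≥0} {f : X → Y}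
  {s : Set X}

lemma of_dist_le (h : ∀ x ∈ s, ∀ y ∈ s, dist (f x) (f y) ≤ C * dist x y ^ (r : ℝ)) :
    HolderOnWith C r f s := by
  intro x hx y hy
  rw [edist_dist, edist_dist, ENNReal.ofReal_rpow_of_nonneg dist_nonneg r.coe_nonneg,
    ← ENNReal.ofReal_coe_nnreal, ← ENNReal.ofReal_mul C.coe_nonneg]
  exact ENNReal.ofReal_le_ofReal (h x hx y hy)

theorem clm_apply {𝕜 E F : Type*} [NontriviallyNormedField 𝕜] [SeminormedAddCommGroup E]
    [NormedSpace 𝕜 E] [SeminormedAddCommGroup F] [NormedSpace 𝕜 F] {f : X → E →L[𝕜] F}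
    {g : X → E} {Cf Cg Kf Kg : ℝ≥0} (hf : HolderOnWith Cf r f s) (hg : HolderOnWith Cg r g s)
    (hfK : ∀ x ∈ s, ‖f x‖ ≤ Kf) (hgK : ∀ x ∈ s, ‖g x‖ ≤ Kg) :
    HolderOnWith (Cf * Kg + Kf * Cg) r (fun x => f x (g x)) s := by
  refine of_dist_le fun x hx y hy => ?_
  have hD : 0 ≤ dist x y ^ (r : ℝ) := by positivity
  calc dist (f x (g x)) (f y (g y)) ≤ ‖f x - f y‖ * ‖g x‖ + ‖f y‖ * ‖g x - g y‖ := by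
        rw [dist_eq_norm, show f x (g x) - f y (g y) = (f x - f y) (g x) + f y (g x - g y) by
          simp]
        exact (norm_add_le _ _).trans
          (add_le_add ((f x - f y).le_opNorm _) ((f y).le_opNorm _))
    _ ≤ Cf * dist x y ^ (r : ℝ) * Kg + Kf * (Cg * dist x y ^ (r : ℝ)) := by
        rw [← dist_eq_norm, ← dist_eq_norm]
        gcongr
        exacts [hf.dist_le hx hy, hgK x hx, hfK y hy, hg.dist_le hx hy]
    _ = ↑(Cf * Kg + Kf * Cg) * dist x y ^ (r : ℝ) := by push_cast; ring

end HolderOnWith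

lemma LipschitzOnWith.holderOnWith_of_edist_le {X Y : Type*} [PseudoEMetricSpace X]
    [PseudoEMetricSpace Y] {f : X → Y} {s : Set X} {K D r : ℝ≥0} (hf : LipschitzOnWith K f s)
    (hD : ∀ x ∈ s, ∀ y ∈ s, edist (f x) (f y) ≤ D) (hr : r ≤ 1) :
    HolderOnWith (K ^ (r : ℝ) * D ^ ((1 - r : ℝ≥0) : ℝ)) r f s := by
  have hbdd : HolderOnWith D 0 f s := fun x hx y hy => by simpa using hD x hx y hy
  simpa using (holderOnWith_one.mpr hf).interpolate hbdd (add_tsub_cancel_of_le hr)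

lemma HolderOnWith.hausdorffMeasure_image_eq_zero {X Y : Type*} [EMetricSpace X]
    [EMetricSpace Y] [MeasurableSpace Y] [BorelSpace Y] {f : X → Y} {s : Set X} {C r p : ℝ≥0}
    (hf : HolderOnWith C r f s) (hr : 0 < r) (hs : dimH s < r * p) : μH[p] (f '' s) = 0 :=
  hausdorffMeasure_of_dimH_lt <|
    (hf.dimH_image_le hr).trans_lt (ENNReal.div_lt_of_lt_mul' (by exact_mod_cast hs))

lemma lipschitzWith_piSplitAt_symm {ι : Type*} [Fintype ι] [DecidableEq ι] (j : ι)
    (β : ι → Type*) [∀ i, PseudoEMetricSpace (β i)] :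
    LipschitzWith 1 (Equiv.piSplitAt j β).symm := by
  refine LipschitzWith.of_edist_le fun p q => edist_pi_le_iff.mpr fun i => ?_
  rw [Prod.edist_eq]
  by_cases h : i = j
  · subst h
    simp [Equiv.piSplitAt]
  · simp only [Equiv.piSplitAt, Equiv.coe_fn_symm_mk, h, dite_false]
    exact (edist_le_pi_edist p.2 q.2 ⟨i, h⟩).trans le_sup_right

lemma abs_div_sub_div_le {u v u' v' R δ : ℝ} (hδ : 0 < δ) (hu' : |u'| ≤ R) (hv' : |v'| ≤ R)
    (hv : δ ≤ |v|) (hδv' : δ ≤ |v'|) :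
    |u / v - u' / v'| ≤ R / δ ^ 2 * (|u - u'| + |v - v'|) := by
  have hv0 : v ≠ 0 := abs_pos.mp (hδ.trans_le hv)
  have hv'0 : v' ≠ 0 := abs_pos.mp (hδ.trans_le hδv')
  have hnum : |u * v' - v * u'| ≤ R * (|u - u'| + |v - v'|) := by
    rw [show u * v' - v * u' = (u - u') * v' - (v - v') * u' by ring]
    refine (abs_sub _ _).trans ?_
    rw [abs_mul, abs_mul]
    nlinarith [abs_nonneg (u - u'), abs_nonneg (v - v')]
  have hden : δ ^ 2 ≤ |v * v'| := by rw [abs_mul, sq]; gcongr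
  rw [div_sub_div _ _ hv0 hv'0, abs_div, div_mul_eq_mul_div]
  have hR : 0 ≤ R := (abs_nonneg _).trans hu'
  exact div_le_div₀ (by positivity) hnum (by positivity) hden

/-- Junk value `0` when `b (Fin.last n) = 0`. -/
noncomputable def dehomogenize {n : ℕ} (b : Fin (n + 1) → ℝ) : Fin n → ℝ :=
  fun i => b i.castSucc / b (Fin.last n)

lemma dehomogenize_smul {n : ℕ} {c : ℝ} (hc : c ≠ 0) (b : Fin (n + 1) → ℝ) :
    dehomogenize (c • b) = dehomogenize b := by
  funext i
  simp only [dehomogenize, Pi.smul_apply, smul_eq_mul, mul_div_mul_left _ _ hc]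

lemma dehomogenize_of_last_eq_one {n : ℕ} {b : Fin (n + 1) → ℝ} (hb : b (Fin.last n) = 1) :
    dehomogenize b = Fin.init b := by
  funext i
  simp [dehomogenize, hb, Fin.init]

lemma lipschitzOnWith_dehomogenize {n : ℕ} {R δ : ℝ≥0} (hδ : 0 < δ) :
    LipschitzOnWith (2 * R / δ ^ 2) dehomogenize
      {b : Fin (n + 1) → ℝ | ‖b‖ ≤ R ∧ δ ≤ |b (Fin.last n)|} := by
  refine LipschitzOnWith.of_dist_le_mul fun b hb b' hb' => ?_
  refine (dist_pi_le_iff (by positivity)).mpr fun i => ?_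
  have hcoord : ∀ k, |b' k| ≤ R := fun k => (norm_le_pi_norm b' k).trans hb'.1
  have hdist : ∀ k, |b k - b' k| ≤ dist b b' := fun k => by
    simpa [Real.dist_eq] using dist_le_pi_dist b b' k
  calc dist (dehomogenize b i) (dehomogenize b' i)
      ≤ R / δ ^ 2 * (|b i.castSucc - b' i.castSucc| + |b (Fin.last n) - b' (Fin.last n)|) :=
        abs_div_sub_div_le (by exact_mod_cast hδ) (hcoord _) (hcoord _) hb.2 hb'.2
    _ ≤ R / δ ^ 2 * (dist b b' + dist b b') := by gcongr <;> exact hdist _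
    _ = ↑(2 * R / δ ^ 2 : ℝ≥0) * dist b b' := by push_cast; ring

section AffineChart

variable {E ι : Type*} [DecidableEq ι] {n : ℕ}

def affineChart (j : ι) (w : {i // i ≠ j} → ℝ) : ι → ℝ :=
  (Equiv.piSplitAt j fun _ => ℝ).symm (1, w)

lemma lipschitzWith_affineChart [Fintype ι] (j : ι) : LipschitzWith 1 (affineChart j) := by
  have h := (lipschitzWith_piSplitAt_symm j fun _ => ℝ).comp (LipschitzWith.prodMk_left (1 : ℝ))
  rw [mul_one] at h
  exact h

lemma exists_affineChart_eq_smul {ζ : ι → ℝ} {j : ι} (hj : ζ j ≠ 0) :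
    ∃ w, affineChart j w = (ζ j)⁻¹ • ζ := by
  refine ⟨(Equiv.piSplitAt j _ ((ζ j)⁻¹ • ζ)).2, ?_⟩
  rw [affineChart, Equiv.symm_apply_eq]
  ext
  · simp [Equiv.piSplitAt, inv_mul_cancel₀ hj]
  · rfl

variable [Fintype ι] (F : E → (ι → ℝ) →L[ℝ] (Fin (n + 1) → ℝ))

/-- Countably many pieces (over `k`), on each of which the chart map is globally Hölder. -/
def chartPiece (s : Set E) (j : ι) (k : ℕ) : Set (E × ({i // i ≠ j} → ℝ)) :=
  {q | q.1 ∈ s ∧ ‖F q.1‖ ≤ k ∧ ‖affineChart j q.2‖ ≤ k ∧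
    (k + 1 : ℝ)⁻¹ ≤ |F q.1 (affineChart j q.2) (Fin.last n)|}

variable {F}

lemma exists_holderOnWith_chartPiece [PseudoMetricSpace E] {C r : ℝ≥0} {s : Set E}
    (hF : HolderOnWith C r F s) (hr : r ≤ 1) (j : ι) (k : ℕ) :
    ∃ K, HolderOnWith K r (fun q => dehomogenize (F q.1 (affineChart j q.2)))
      (chartPiece F s j k) := by
  set T := chartPiece F s j k
  have hFT : HolderOnWith C r (fun q => F q.1) T := by
    have h := hF.comp (holderOnWith_one.mpr LipschitzWith.prod_fst.lipschitzOnWith)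
      fun q (hq : q ∈ T) => hq.1
    rwa [mul_one, NNReal.one_rpow, mul_one] at h
  have hbdd : ∀ q ∈ T, ∀ q' ∈ T,
      edist (affineChart j q.2) (affineChart j q'.2) ≤ (2 * k : ℝ≥0) := by
    intro q hq q' hq'
    rw [edist_le_coe, ← NNReal.coe_le_coe, coe_nndist]
    push_cast
    exact (dist_le_norm_add_norm _ _).trans (by linarith [hq.2.2.1, hq'.2.2.1])
  have hchartT : HolderOnWith _ r (fun q => affineChart j q.2) T :=
    ((lipschitzWith_affineChart j).comp LipschitzWith.prod_snd).lipschitzOnWith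
      |>.holderOnWith_of_edist_le hbdd hr
  have hGT := hFT.clm_apply hchartT (Kf := k) (Kg := k) (fun q hq => by simpa using hq.2.1)
    (fun q hq => by simpa using hq.2.2.1)
  have hmaps : MapsTo (fun q => F q.1 (affineChart j q.2)) T
      {b | ‖b‖ ≤ ((k * k : ℕ) : ℝ≥0) ∧ ((k + 1 : ℝ≥0)⁻¹ : ℝ≥0) ≤ |b (Fin.last n)|} := by
    intro q hq
    refine ⟨?_, by simpa using hq.2.2.2⟩
    push_cast
    exact ((F q.1).le_opNorm _).trans (mul_le_mul hq.2.1 hq.2.2.1 (norm_nonneg _) (by positivity))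
  have h := (holderOnWith_one.mpr (lipschitzOnWith_dehomogenize (by positivity))).comp hGT hmaps
  rw [one_mul r] at h
  exact ⟨_, h⟩

lemma dehomogenize_image_subset_iUnion_chartPiece (s : Set E) :
    dehomogenize '' {b | (∃ x ∈ s, b ∈ LinearMap.range (F x : (ι → ℝ) →ₗ[ℝ] _)) ∧
      b (Fin.last n) ≠ 0} ⊆
    ⋃ (j) (k : ℕ), (fun q => dehomogenize (F q.1 (affineChart j q.2))) '' chartPiece F s j k := by
  rintro _ ⟨b, ⟨⟨x, hx, ζ, rfl⟩, hlast⟩, rfl⟩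
  obtain ⟨j, hj⟩ : ∃ j, ζ j ≠ 0 := by
    by_contra! h
    have hζ : ζ = 0 := funext h
    simp [hζ] at hlast
  obtain ⟨w, hw⟩ := exists_affineChart_eq_smul hj
  have hFw : F x (affineChart j w) = (ζ j)⁻¹ • F x ζ := by simp [hw]
  have hv : 0 < |F x (affineChart j w) (Fin.last n)| := by
    rw [hFw, Pi.smul_apply, smul_eq_mul, abs_mul]
    exact mul_pos (by positivity) (abs_pos.mpr hlast)
  obtain ⟨k, hk⟩ := exists_nat_ge (max (max ‖F x‖ ‖affineChart j w‖)
    |F x (affineChart j w) (Fin.last n)|⁻¹)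
  simp only [max_le_iff] at hk
  refine mem_iUnion₂.mpr ⟨j, k, (x, w), ⟨hx, hk.1.1, hk.1.2, ?_⟩, ?_⟩
  · exact inv_le_of_inv_le₀ hv (by linarith [hk.2])
  · simp [hFw, dehomogenize_smul (inv_ne_zero hj)]

end AffineChart

theorem hausdorffMeasure_dehomogenize_image_eq_zero {E ι : Type*} [NormedAddCommGroup E]
    [NormedSpace ℝ E] [FiniteDimensional ℝ E] [Fintype ι] [DecidableEq ι] {n : ℕ}
    {F : E → (ι → ℝ) →L[ℝ] (Fin (n + 1) → ℝ)} {C r : ℝ≥0} {s : Set E}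
    (hF : HolderOnWith C r F s) (hr₀ : 0 < r) (hr₁ : r ≤ 1)
    (hdim : (Module.finrank ℝ E + Fintype.card ι : ℝ) < r * (n + 1)) :
    μH[n] (dehomogenize '' {b | (∃ x ∈ s, b ∈ LinearMap.range (F x : (ι → ℝ) →ₗ[ℝ] _)) ∧
      b (Fin.last n) ≠ 0}) = 0 := by
  refine measure_mono_null (dehomogenize_image_subset_iUnion_chartPiece (F := F) s)
    (measure_iUnion_null fun j => measure_iUnion_null fun k => ?_)
  obtain ⟨K, hK⟩ := exists_holderOnWith_chartPiece hF hr₁ j k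
  -- the chart drops one parameter, and `r ≤ 1` turns `r * (n + 1)` into `r * n + 1`
  have hcard : Fintype.card {i // i ≠ j} + 1 = Fintype.card ι := by
    simpa using Fintype.card_congr (Equiv.optionSubtypeNe j)
  have hlt : dimH (chartPiece F s j k) < r * n := by
    refine (dimH_mono (subset_univ _)).trans_lt ?_
    rw [Real.dimH_univ_eq_finrank, Module.finrank_prod, Module.finrank_fintype_fun_eq_card,
      ← ENNReal.coe_natCast, ← ENNReal.coe_natCast n, ← ENNReal.coe_mul, ENNReal.coe_lt_coe,
      ← NNReal.coe_lt_coe]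
    have hcard' : (Fintype.card {i // i ≠ j} : ℝ) + 1 = Fintype.card ι := by exact_mod_cast hcard
    have hr₁' : (r : ℝ) ≤ 1 := hr₁
    push_cast
    linarith
  simpa using hK.hausdorffMeasure_image_eq_zero hr₀ hlt

theorem stmt18_general (d m n N : ℕ) (α : ℝ) (hα0 : 0 < α) (hα1 : α ≤ 1)
    (Ω : Set (EuclideanSpace ℝ (Fin d)))
    (F : EuclideanSpace ℝ (Fin d) → ((Fin m → ℝ) →L[ℝ] (Fin (n + 1) → ℝ)))
    (S : Fin N → Set (EuclideanSpace ℝ (Fin d))) (hcover : Ω ⊆ ⋃ i, S i)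
    (C : NNReal) (hHolder : ∀ i, HolderOnWith C ⟨α, hα0.le⟩ F (S i))
    (hP : (d + m : ℝ) < α * (n + 1)) :
    Measure.hausdorffMeasure (n : ℝ)
        ((fun b : Fin (n + 1) → ℝ => fun i : Fin n => b i.castSucc) ''
          {b : Fin (n + 1) → ℝ |
            (∃ x ∈ Ω, b ∈ LinearMap.range (F x : (Fin m → ℝ) →ₗ[ℝ] (Fin (n + 1) → ℝ))) ∧ b (Fin.last n) = 1}) = 0 ∧
    ∀ᵐ a ∂(volume : Measure (Fin n → ℝ)),
      ¬ ∃ x ∈ Ω, (fun i : Fin (n + 1) => if h : i.val < n then a ⟨i.val, h⟩ else 1) ∈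
          LinearMap.range (F x : (Fin m → ℝ) →ₗ[ℝ] (Fin (n + 1) → ℝ)) := by
  have hnull : μH[n] (Fin.init ''
      {b : Fin (n + 1) → ℝ | (∃ x ∈ Ω, b ∈ LinearMap.range (F x : (Fin m → ℝ) →ₗ[ℝ] _)) ∧
        b (Fin.last n) = 1}) = 0 := by
    have hdim : (Module.finrank ℝ (EuclideanSpace ℝ (Fin d)) + Fintype.card (Fin m) : ℝ) <
        α * (n + 1) := by
      rwa [finrank_euclideanSpace_fin, Fintype.card_fin]
    refine measure_mono_null ?_ (measure_iUnion_null fun i =>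
      hausdorffMeasure_dehomogenize_image_eq_zero (hHolder i) hα0 hα1 hdim)
    rintro _ ⟨b, ⟨⟨x, hx, hb⟩, hlast⟩, rfl⟩
    obtain ⟨i, hi⟩ := mem_iUnion.mp (hcover hx)
    exact mem_iUnion.mpr ⟨i, b, ⟨⟨x, hi, hb⟩, by simp [hlast]⟩, dehomogenize_of_last_eq_one hlast⟩
  refine ⟨hnull, ?_⟩
  rw [ae_iff, ← hausdorffMeasure_pi_real, Fintype.card_fin]
  refine measure_mono_null ?_ hnull
  intro a ha
  refine ⟨_, ⟨not_not.mp ha, by simp⟩, ?_⟩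
  funext i
  simp [Fin.init]

/-- Whitney-reduction / Sard-type statement: let `Ω ⊂ ℝ^d` be open and bounded,
`x ↦ F_x` a family of linear maps `ℝ^m → ℝ^P` (`P = n + 1`), each of rank `d + 1`,
which is `α`-Hölder on each of finitely many sets covering `Ω`. Let
`B = (⋃_{x ∈ Ω} Im F_x) ∩ {b : b_P = 1}`. If `P > (d + m)/α` then the projection of `B`
onto the first `P - 1` coordinates has zero `(P-1)`-dimensional Hausdorff measure;
consequently for a.e. `a ∈ ℝ^{P-1}` the vector `(a₁, …, a_{P-1}, 1)` is in no `Im F_x`. -/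
theorem stmt18 (d m n N : ℕ) (α : ℝ) (hα0 : 0 < α) (hα1 : α ≤ 1)
    (Ω : Set (EuclideanSpace ℝ (Fin d))) (hΩo : IsOpen Ω) (hΩb : Bornology.IsBounded Ω)
    (F : EuclideanSpace ℝ (Fin d) → ((Fin m → ℝ) →L[ℝ] (Fin (n + 1) → ℝ)))
    (S : Fin N → Set (EuclideanSpace ℝ (Fin d))) (hcover : Ω ⊆ ⋃ i, S i)
    (C : NNReal) (hHolder : ∀ i, HolderOnWith C ⟨α, hα0.le⟩ F (S i))
    (hrank : ∀ x ∈ Ω, Module.finrank ℝ (LinearMap.range (F x : (Fin m → ℝ) →ₗ[ℝ] (Fin (n + 1) → ℝ))) = d + 1)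
    (hP : (d + m : ℝ) < α * (n + 1)) :
    Measure.hausdorffMeasure (n : ℝ)
        ((fun b : Fin (n + 1) → ℝ => fun i : Fin n => b i.castSucc) ''
          {b : Fin (n + 1) → ℝ |
            (∃ x ∈ Ω, b ∈ LinearMap.range (F x : (Fin m → ℝ) →ₗ[ℝ] (Fin (n + 1) → ℝ))) ∧ b (Fin.last n) = 1}) = 0 ∧
    ∀ᵐ a ∂(volume : Measure (Fin n → ℝ)),
      ¬ ∃ x ∈ Ω, (fun i : Fin (n + 1) => if h : i.val < n then a ⟨i.val, h⟩ else 1) ∈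
          LinearMap.range (F x : (Fin m → ℝ) →ₗ[ℝ] (Fin (n + 1) → ℝ)) :=
  stmt18_general d m n N α hα0 hα1 Ω F S hcover C hHolder hP
end
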